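/- arXiv:2303.10807 — 4 statements merged into one kernel-verified Lean document; each statement's English description precedes it below -/
import Mathlib

section
/- Let d ≥ 1, δ > 0, let μ be a finite nonnegative Borel measure on [0,δ], let K ≥ 0 and let b : ℝ^d × ℝ^d → ℝ^d satisfy ‖b(x,y) − b(x̃,ỹ)‖ ≤ K(‖x−x̃‖ + ‖y−ỹ‖) for all x, x̃, y, ỹ ∈ ℝ^d. Then for every continuous φ : [−δ,0] → ℝ^d there exists a continuous function x : [−δ,1] → ℝ^d such that x(t) = φ(t) for all t ∈ [−δ,0] and x(t) = φ(0) + ∫₀^t b(x(s), ∫₀^δ x(s−u) μ(du)) ds for all t ∈ [0,1]. -/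
open MeasureTheory Set Function BoundedContinuousFunction

noncomputable section

/-!
The solution is a fixed point of the Picard map
`f ↦ (t ↦ ψ (min t 0) + ∫₀^{max 0 (min 1 t)} b (f s, ∫ f (s - u) dν(u)) ds)`
on bounded continuous paths `ℝ → E`, where `ψ` extends the initial path and
`ν = μ|[0,δ]`; every image path already equals `ψ` on `(-∞, 0]`. Since `ν` lives on `[0, ∞)`, the drift at time `s` only sees the path up to
time `s`, and there it is `K (1 + ν(ℝ))`-Lipschitz for the sup norm. The usual Picard
induction then makes the `n`-th iterate `(K (1 + ν(ℝ)))ⁿ / n!`-Lipschitz, so some iterate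
is a contraction.
-/

theorem exists_isFixedPt_of_dist_iterate_le {X : Type*} [MetricSpace X] [CompleteSpace X]
    [Nonempty X] {T : X → X} {C : ℝ} (hC : 0 ≤ C)
    (hT : ∀ n x y, dist (T^[n] x) (T^[n] y) ≤ C ^ n / n.factorial * dist x y) :
    ∃ x, IsFixedPt T x := by
  obtain ⟨n, hn⟩ := (FloorSemiring.tendsto_pow_div_factorial_atTop C).eventually
    (gt_mem_nhds zero_lt_one) |>.exists
  have hT' : ContractingWith ⟨C ^ n / n.factorial, by positivity⟩ T^[n] :=
    ⟨hn, LipschitzWith.of_dist_le_mul (hT n)⟩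
  exact ⟨_, hT'.isFixedPt_fixedPoint_iterate⟩

theorem BoundedContinuousFunction.exists_eqOn_Icc {α β : Type*} [LinearOrder α]
    [TopologicalSpace α] [OrderTopology α] [CompactIccSpace α] [PseudoMetricSpace β]
    {a c : α} (hac : a ≤ c) {g : α → β} (hg : ContinuousOn g (Icc a c)) :
    ∃ ψ : α →ᵇ β, EqOn ψ g (Icc a c) :=
  ⟨(mkOfCompact ⟨_, hg.domRestrict⟩).compContinuous ⟨projIcc a c hac, continuous_projIcc⟩,
    fun t ht => by simp [projIcc_of_mem hac ht]⟩

theorem continuous_uncurry_of_norm_sub_le {F G : Type*} [SeminormedAddCommGroup F]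
    [SeminormedAddCommGroup G] {K : ℝ} (hK : 0 ≤ K) {b : F → F → G}
    (hb : ∀ x x' y y', ‖b x y - b x' y'‖ ≤ K * (‖x - x'‖ + ‖y - y'‖)) :
    Continuous (uncurry b) := by
  refine (LipschitzWith.of_dist_le' (K := 2 * K) fun p q => ?_).continuous
  rw [dist_eq_norm, dist_eq_norm]
  calc ‖b p.1 p.2 - b q.1 q.2‖ ≤ K * (‖(p - q).1‖ + ‖(p - q).2‖) := hb _ _ _ _
    _ ≤ K * (‖p - q‖ + ‖p - q‖) := by gcongr; exacts [norm_fst_le _, norm_snd_le _]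
    _ = 2 * K * ‖p - q‖ := by ring

variable {E : Type*} [NormedAddCommGroup E] [NormedSpace ℝ E]

section Picard

variable (ψ : ℝ →ᵇ E) {τ : ℝ} (hτ : 0 ≤ τ) (G : (ℝ →ᵇ E) → C(ℝ, E))

def primitiveOnIcc (g : C(ℝ, E)) : ℝ →ᵇ E :=
  (mkOfCompact ((⟨fun t => ∫ s in 0..t, g s,
      intervalIntegral.continuous_primitive (fun _ _ => g.continuous.intervalIntegrable _ _) 0⟩ :
      C(ℝ, E)).restrict (Icc 0 τ))).compContinuous ⟨projIcc 0 τ hτ, continuous_projIcc⟩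

def picardMap (f : ℝ →ᵇ E) : ℝ →ᵇ E :=
  ψ.compContinuous ⟨fun t => min t 0, by fun_prop⟩ + primitiveOnIcc hτ (G f)

theorem picardMap_apply (f : ℝ →ᵇ E) (t : ℝ) :
    picardMap ψ hτ G f t = ψ (min t 0) + ∫ s in 0..max 0 (min τ t), G f s := rfl

theorem picardMap_apply_of_nonpos (f : ℝ →ᵇ E) {t : ℝ} (ht : t ≤ 0) :
    picardMap ψ hτ G f t = ψ t := by
  rw [picardMap_apply, min_eq_left ht, min_eq_right (ht.trans hτ), max_eq_left ht,
    intervalIntegral.integral_same, add_zero]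

theorem picardMap_apply_of_mem_Icc (f : ℝ →ᵇ E) {t : ℝ} (ht : t ∈ Icc 0 τ) :
    picardMap ψ hτ G f t = ψ 0 + ∫ s in 0..t, G f s := by
  rw [picardMap_apply, min_eq_right ht.1, min_eq_right ht.2, max_eq_right ht.1]

theorem integral_mul_pow_div_factorial (L a : ℝ) (n : ℕ) :
    ∫ s in 0..a, L * (L * s) ^ n / n.factorial = (L * a) ^ (n + 1) / (n + 1).factorial := by
  simp only [mul_pow, mul_div_assoc, intervalIntegral.integral_const_mul,
    intervalIntegral.integral_div, integral_pow, zero_pow n.succ_ne_zero, sub_zero]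
  push_cast [Nat.factorial_succ]
  field_simp
  ring

variable {ψ hτ G} in
theorem norm_iterate_picardMap_sub_le {L : ℝ} (hL : 0 ≤ L)
    (hG : ∀ f g s C, (∀ r ≤ s, ‖f r - g r‖ ≤ C) → ‖G f s - G g s‖ ≤ L * C)
    (n : ℕ) (f g : ℝ →ᵇ E) (t : ℝ) :
    ‖(picardMap ψ hτ G)^[n] f t - (picardMap ψ hτ G)^[n] g t‖ ≤
      (L * max 0 (min τ t)) ^ n / n.factorial * dist f g := by
  induction n generalizing t with
  | zero => simpa [← dist_eq_norm] using dist_coe_le_dist t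
  | succ n ih =>
    set F := (picardMap ψ hτ G)^[n] f
    set F' := (picardMap ψ hτ G)^[n] g
    have hq : 0 ≤ max 0 (min τ t) := le_max_left _ _
    have hbound : ∀ s ∈ Ioc 0 (max 0 (min τ t)),
        ‖G F s - G F' s‖ ≤ L * (L * s) ^ n / n.factorial * dist f g := by
      intro s hs
      rw [mul_div_assoc, mul_assoc]
      refine hG F F' s _ fun r hr => (ih r).trans ?_
      have : max 0 (min τ r) ≤ s := max_le hs.1.le ((min_le_right _ _).trans hr)
      gcongr
    rw [iterate_succ_apply', iterate_succ_apply', picardMap_apply, picardMap_apply,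
      add_sub_add_left_eq_sub, ← intervalIntegral.integral_sub
        ((G F).continuous.intervalIntegrable _ _) ((G F').continuous.intervalIntegrable _ _),
      ← integral_mul_pow_div_factorial, ← intervalIntegral.integral_mul_const]
    have hcont : Continuous fun s : ℝ => L * (L * s) ^ n / n.factorial * dist f g := by fun_prop
    exact intervalIntegral.norm_integral_le_of_norm_le hq (.of_forall hbound)
      (hcont.intervalIntegrable _ _)

theorem exists_isFixedPt_picardMap [CompleteSpace E] {L : ℝ} (hL : 0 ≤ L)
    (hG : ∀ f g s C, (∀ r ≤ s, ‖f r - g r‖ ≤ C) → ‖G f s - G g s‖ ≤ L * C) :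
    ∃ y, IsFixedPt (picardMap ψ hτ G) y := by
  refine exists_isFixedPt_of_dist_iterate_le (mul_nonneg hL hτ) fun n f g => ?_
  refine (dist_le (by positivity)).2 fun t => ?_
  rw [dist_eq_norm]
  refine (norm_iterate_picardMap_sub_le hL hG n f g t).trans ?_
  have : max 0 (min τ t) ≤ τ := max_le hτ (min_le_left _ _)
  gcongr

end Picard

section Delay

variable {ν : Measure ℝ} [IsFiniteMeasure ν]

theorem continuous_integral_comp_sub (f : ℝ →ᵇ E) :
    Continuous fun s => ∫ u, f (s - u) ∂ν :=
  continuous_of_dominated (bound := fun _ => ‖f‖)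
    (fun _ => by fun_prop) (fun _ => .of_forall fun _ => f.norm_coe_le_norm _)
    (integrable_const _) (.of_forall fun _ => by fun_prop)

theorem norm_integral_comp_sub_sub_le (hν : ∀ᵐ u ∂ν, 0 ≤ u) {f g : ℝ →ᵇ E}
    {s C : ℝ} (hfg : ∀ r ≤ s, ‖f r - g r‖ ≤ C) :
    ‖∫ u, f (s - u) ∂ν - ∫ u, g (s - u) ∂ν‖ ≤ ν.real univ * C := by
  have hint (h : ℝ →ᵇ E) : Integrable (fun u => h (s - u)) ν :=
    .of_bound (by fun_prop) ‖h‖ (.of_forall fun _ => h.norm_coe_le_norm _)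
  rw [← integral_sub (hint f) (hint g), mul_comm]
  exact norm_integral_le_of_norm_le_const (hν.mono fun u hu => hfg _ (by linarith))

def delayDrift {b : E → E → E} (hb : Continuous (uncurry b)) (ν : Measure ℝ)
    [IsFiniteMeasure ν] (f : ℝ →ᵇ E) : C(ℝ, E) :=
  ⟨fun s => b (f s) (∫ u, f (s - u) ∂ν),
    hb.comp (f.continuous.prodMk (continuous_integral_comp_sub f))⟩

theorem norm_delayDrift_sub_le (hν : ∀ᵐ u ∂ν, 0 ≤ u) {K : ℝ} (hK : 0 ≤ K)
    {b : E → E → E}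
    (hb : ∀ x x' y y', ‖b x y - b x' y'‖ ≤ K * (‖x - x'‖ + ‖y - y'‖))
    (hbc : Continuous (uncurry b)) {f g : ℝ →ᵇ E} {s C : ℝ}
    (hfg : ∀ r ≤ s, ‖f r - g r‖ ≤ C) :
    ‖delayDrift hbc ν f s - delayDrift hbc ν g s‖ ≤ K * (1 + ν.real univ) * C := by
  have hpoint := hfg s le_rfl
  have hdelay := norm_integral_comp_sub_sub_le hν hfg
  have hC : 0 ≤ C := (norm_nonneg _).trans hpoint
  calc ‖delayDrift hbc ν f s - delayDrift hbc ν g s‖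
      ≤ K * (‖f s - g s‖ + ‖∫ u, f (s - u) ∂ν - ∫ u, g (s - u) ∂ν‖) := hb ..
    _ ≤ K * (C + ν.real univ * C) := by gcongr
    _ = K * (1 + ν.real univ) * C := by ring

end Delay

theorem delay_ode_exists_general
    (d : ℕ) (δ : ℝ) (hδ : 0 < δ)
    (μ : Measure ℝ) [IsFiniteMeasure μ]
    (K : ℝ) (hK : 0 ≤ K)
    (b : EuclideanSpace ℝ (Fin d) → EuclideanSpace ℝ (Fin d) → EuclideanSpace ℝ (Fin d))
    (hb : ∀ x x' y y' : EuclideanSpace ℝ (Fin d),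
      ‖b x y - b x' y'‖ ≤ K * (‖x - x'‖ + ‖y - y'‖))
    (φ : ℝ → EuclideanSpace ℝ (Fin d)) (hφ : ContinuousOn φ (Icc (-δ) 0)) :
    ∃ x : ℝ → EuclideanSpace ℝ (Fin d),
      ContinuousOn x (Icc (-δ) 1) ∧
      (∀ t ∈ Icc (-δ) (0:ℝ), x t = φ t) ∧
      (∀ t ∈ Icc (0:ℝ) 1,
        x t = φ 0 + ∫ s in (0:ℝ)..t, b (x s) (∫ u in Icc (0:ℝ) δ, x (s - u) ∂μ)) := by
  obtain ⟨ψ, hψ⟩ := BoundedContinuousFunction.exists_eqOn_Icc (neg_nonpos.2 hδ.le) hφ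
  have hν : ∀ᵐ u ∂μ.restrict (Icc 0 δ), 0 ≤ u :=
    (ae_restrict_mem measurableSet_Icc).mono fun _ hu => hu.1
  have hbc := continuous_uncurry_of_norm_sub_le hK hb
  obtain ⟨x, hx⟩ := exists_isFixedPt_picardMap ψ zero_le_one (delayDrift hbc _)
    (by positivity) fun _ _ _ _ => norm_delayDrift_sub_le hν hK hb hbc
  refine ⟨x, x.continuous.continuousOn, fun t ht => ?_, fun t ht => ?_⟩
  · rw [← hx, picardMap_apply_of_nonpos _ _ _ _ ht.2]
    exact hψ ht
  · nth_rw 1 [← hx]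
    rw [picardMap_apply_of_mem_Icc _ _ _ _ ht, hψ ⟨neg_nonpos.2 hδ.le, le_rfl⟩]
    rfl

/-- Existence of a solution to the delay ordinary differential equation
`x(t) = φ(0) + ∫₀ᵗ b(x(s), ∫₀^δ x(s-u) μ(du)) ds` with initial path `φ` on `[-δ,0]`,
for a Lipschitz drift `b` and a finite delay measure `μ` on `[0,δ]`. -/
theorem delay_ode_exists
    (d : ℕ) (hd : 1 ≤ d) (δ : ℝ) (hδ : 0 < δ)
    (μ : Measure ℝ) [IsFiniteMeasure μ]
    (K : ℝ) (hK : 0 ≤ K)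
    (b : EuclideanSpace ℝ (Fin d) → EuclideanSpace ℝ (Fin d) → EuclideanSpace ℝ (Fin d))
    (hb : ∀ x x' y y' : EuclideanSpace ℝ (Fin d),
      ‖b x y - b x' y'‖ ≤ K * (‖x - x'‖ + ‖y - y'‖))
    (φ : ℝ → EuclideanSpace ℝ (Fin d)) (hφ : ContinuousOn φ (Icc (-δ) 0)) :
    ∃ x : ℝ → EuclideanSpace ℝ (Fin d),
      ContinuousOn x (Icc (-δ) 1) ∧
      (∀ t ∈ Icc (-δ) (0:ℝ), x t = φ t) ∧
      (∀ t ∈ Icc (0:ℝ) 1,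
        x t = φ 0 + ∫ s in (0:ℝ)..t, b (x s) (∫ u in Icc (0:ℝ) δ, x (s - u) ∂μ)) :=
  delay_ode_exists_general d δ hδ μ K hK b hb φ hφ
end
end

section
/- Let (Ω, 𝓕, P) be a probability space, d ≥ 1, δ > 0, μ a finite nonnegative Borel measure on [0,δ], p ≥ 1 a real number, K₁, K₂ ≥ 0 and ε ∈ (0,1]. Let X : ℝ × Ω → ℝ^d be jointly measurable with E[‖X(t,·)‖^p] < ∞ for every t and E[‖X(t,·) − X(s,·)‖^p] ≤ K₁|t−s|^p + K₂ ε^p |t−s|^{p/2} for all s, t ∈ ℝ. Then for every t ∈ ℝ and every integer n ≥ 1, E[‖∫₀^δ X(t−u,·) μ(du) − ∫₀^δ X(t−g_n(u),·) μ(du)‖^p] ≤ μ([0,δ])^p (K₁ n^{−p} + K₂ ε^p n^{−p/2}); in particular the discretization error E[|H(X_{t−·}) − H_n(X_{t−·})|^p] is O(n^{−p}) + O(ε^p n^{−p/2}). -/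
/-!
The discretization error is the `μ`-integral over `[0,δ]` of the increment
`X(t-u) - X(t-g_n u)`, whose time lag `u - g_n u` lies in `[0, 1/n]`. Jensen's inequality on the
finite measure space `([0,δ], μ)` bounds the `p`-th power of the norm of this integral by
`μ([0,δ])^(p-1)` times the `μ`-integral of the `p`-th powers of the increments. After exchanging
the two integrals by Tonelli, assumption (A2) bounds the `p`-th moment of each increment by
`K₁ n^{-p} + K₂ ε^p n^{-p/2}`.
-/

open MeasureTheory Set Function
open scoped ENNReal NNReal

section
variable {α Ω E : Type*} [MeasurableSpace α] [MeasurableSpace Ω]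
  [NormedAddCommGroup E] [NormedSpace ℝ E]

theorem enorm_integral_sub_le_lintegral_enorm_sub {ν : Measure α} {f g : α → E}
    (hf : AEStronglyMeasurable f ν) (hg : AEStronglyMeasurable g ν) :
    ‖∫ a, f a ∂ν - ∫ a, g a ∂ν‖ₑ ≤ ∫⁻ a, ‖f a - g a‖ₑ ∂ν := by
  by_cases hfg : Integrable (f - g) ν
  · by_cases hfi : Integrable f ν
    · have hgi : Integrable g ν := by simpa using hfi.sub hfg
      rw [← integral_sub hfi hgi]
      exact enorm_integral_le_lintegral_enorm _
    · have hgi : ¬ Integrable g ν := fun hgi => hfi (by simpa using hfg.add hgi)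
      simp [integral_undef hfi, integral_undef hgi]
  · have hinf : ∫⁻ a, ‖f a - g a‖ₑ ∂ν = ∞ :=
      not_lt_top_iff.1 fun hlt => hfg ⟨hf.sub hg, hlt⟩
    simp [hinf]

theorem rpow_lintegral_le_measure_univ_rpow_mul_lintegral_rpow (ν : Measure α)
    {p : ℝ} (hp : 1 ≤ p) {f : α → ℝ≥0∞} (hf : AEMeasurable f ν) :
    (∫⁻ a, f a ∂ν) ^ p ≤ ν univ ^ (p - 1) * ∫⁻ a, f a ^ p ∂ν := by
  have hp0 : 0 < p := by linarith
  have holder := eLpNorm'_le_eLpNorm'_mul_rpow_measure_univ one_pos hp hf.aestronglyMeasurable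
  simp only [eLpNorm'_eq_lintegral_enorm, enorm_eq_self, ENNReal.rpow_one, div_one] at holder
  calc (∫⁻ a, f a ∂ν) ^ p
      ≤ ((∫⁻ a, f a ^ p ∂ν) ^ (1 / p) * ν univ ^ (1 - 1 / p)) ^ p := by gcongr
    _ = ν univ ^ (p - 1) * ∫⁻ a, f a ^ p ∂ν := by
      rw [ENNReal.mul_rpow_of_nonneg _ _ hp0.le, ← ENNReal.rpow_mul, ← ENNReal.rpow_mul,
        one_div_mul_cancel hp0.ne', ENNReal.rpow_one, sub_mul, one_div_mul_cancel hp0.ne',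
        one_mul, mul_comm]

theorem lintegral_enorm_integral_sub_rpow_le (ν : Measure α) [SFinite ν]
    (P : Measure Ω) [SFinite P] {p : ℝ} (hp : 1 ≤ p) {F G : α → Ω → E}
    (hF : StronglyMeasurable (uncurry F)) (hG : StronglyMeasurable (uncurry G)) {C : ℝ≥0∞}
    (hC : ∀ᵐ a ∂ν, ∫⁻ ω, ‖F a ω - G a ω‖ₑ ^ p ∂P ≤ C) :
    ∫⁻ ω, ‖∫ a, F a ω ∂ν - ∫ a, G a ω ∂ν‖ₑ ^ p ∂P ≤ ν univ ^ p * C := by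
  have hdiff : StronglyMeasurable (uncurry fun a ω => F a ω - G a ω) := hF.sub hG
  calc ∫⁻ ω, ‖∫ a, F a ω ∂ν - ∫ a, G a ω ∂ν‖ₑ ^ p ∂P
      ≤ ∫⁻ ω, ν univ ^ (p - 1) * ∫⁻ a, ‖F a ω - G a ω‖ₑ ^ p ∂ν ∂P := by
        refine lintegral_mono fun ω => ?_
        grw [enorm_integral_sub_le_lintegral_enorm_sub hF.of_uncurry_right.aestronglyMeasurable
          hG.of_uncurry_right.aestronglyMeasurable]
        exact rpow_lintegral_le_measure_univ_rpow_mul_lintegral_rpow ν hp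
          hdiff.of_uncurry_right.enorm.aemeasurable
    _ = ν univ ^ (p - 1) * ∫⁻ a, ∫⁻ ω, ‖F a ω - G a ω‖ₑ ^ p ∂P ∂ν := by
        rw [lintegral_const_mul (f := fun ω => ∫⁻ a, ‖F a ω - G a ω‖ₑ ^ p ∂ν) _
            (hdiff.enorm.pow_const p).lintegral_prod_left',
          lintegral_lintegral_swap (f := fun ω a => ‖F a ω - G a ω‖ₑ ^ p)
            ((hdiff.enorm.pow_const p).comp measurable_swap).aemeasurable]
    _ ≤ ν univ ^ (p - 1) * ∫⁻ _, C ∂ν := by grw [lintegral_mono_ae hC]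
    _ = ν univ ^ p * C := by
        have hpow : ν univ ^ p = ν univ ^ (p - 1) * ν univ := by
          simpa using ENNReal.rpow_add_of_nonneg (x := ν univ) (p - 1) 1 (by linarith) zero_le_one
        rw [lintegral_const, hpow, mul_comm C, mul_assoc]

end

/-- The grid map `g_n` of the delay `[0,δ]`. -/
noncomputable def delayGrid (n : ℕ) (δ u : ℝ) : ℝ :=
  min ((⌊(n : ℝ) * u⌋₊ : ℝ) / n) ((⌊(n : ℝ) * δ⌋₊ : ℝ) / n)

theorem measurable_delayGrid (n : ℕ) (δ : ℝ) : Measurable (delayGrid n δ) :=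
  ((measurable_from_nat.comp (Nat.measurable_floor.comp (measurable_const_mul _))).div_const _).min
    measurable_const

theorem sub_delayGrid_mem_Icc {n : ℕ} (hn : 0 < n) {δ u : ℝ} (hu : u ∈ Icc 0 δ) :
    u - delayGrid n δ u ∈ Icc 0 (1 / (n : ℝ)) := by
  have hn0 : (0 : ℝ) < n := by exact_mod_cast hn
  have hgrid : delayGrid n δ u = (⌊(n : ℝ) * u⌋₊ : ℝ) / n :=
    min_eq_left (by gcongr; exact hu.2)
  have hfloor_le : (⌊(n : ℝ) * u⌋₊ : ℝ) ≤ n * u := Nat.floor_le (mul_nonneg n.cast_nonneg hu.1)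
  have hlt_floor : (n : ℝ) * u < ⌊(n : ℝ) * u⌋₊ + 1 := Nat.lt_floor_add_one _
  rw [hgrid, mem_Icc, sub_nonneg, div_le_iff₀ hn0, sub_le_iff_le_add, ← add_div,
    le_div_iff₀ hn0]
  constructor <;> linarith

theorem increment_bound_le_of_mem_Icc {K₁ c p h : ℝ} (hK₁ : 0 ≤ K₁) (hc : 0 ≤ c) (hp : 0 ≤ p)
    {n : ℕ} (hh : h ∈ Icc 0 (1 / (n : ℝ))) :
    K₁ * h ^ p + c * h ^ (p / 2) ≤ K₁ * (n : ℝ) ^ (-p) + c * (n : ℝ) ^ (-(p / 2)) := by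
  obtain ⟨h0, h1⟩ := hh
  rw [Real.rpow_neg n.cast_nonneg, Real.rpow_neg n.cast_nonneg, ← Real.inv_rpow n.cast_nonneg,
    ← Real.inv_rpow n.cast_nonneg, ← one_div]
  gcongr

theorem delay_discretization_error_general
    (Ω : Type*) [MeasurableSpace Ω] (P : Measure Ω) [IsProbabilityMeasure P]
    (d : ℕ) (δ : ℝ)
    (μ : Measure ℝ) [IsFiniteMeasure μ]
    (p : ℝ) (hp : 1 ≤ p)
    (K₁ K₂ : ℝ) (hK₁ : 0 ≤ K₁) (hK₂ : 0 ≤ K₂)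
    (ε : ℝ) (hε : 0 < ε)
    (X : ℝ → Ω → EuclideanSpace ℝ (Fin d))
    (hXm : Measurable (fun q : ℝ × Ω => X q.1 q.2))
    (hinc : ∀ s t : ℝ, (∫⁻ ω, (‖X t ω - X s ω‖₊ : ℝ≥0∞) ^ p ∂P)
        ≤ ENNReal.ofReal (K₁ * |t - s| ^ p + K₂ * ε ^ p * |t - s| ^ (p / 2)))
    (t : ℝ) (n : ℕ) (hn : 1 ≤ n) :
    (∫⁻ ω, (‖(∫ u in Icc (0:ℝ) δ, X (t - u) ω ∂μ)
          - ∫ u in Icc (0:ℝ) δ,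
              X (t - min ((⌊(n:ℝ) * u⌋₊ : ℝ) / n) ((⌊(n:ℝ) * δ⌋₊ : ℝ) / n)) ω ∂μ‖₊
          : ℝ≥0∞) ^ p ∂P)
      ≤ ENNReal.ofReal ((μ (Icc (0:ℝ) δ)).toReal ^ p
          * (K₁ * (n:ℝ) ^ (-p) + K₂ * ε ^ p * (n:ℝ) ^ (-(p / 2)))) := by
  have hXshift : ∀ g : ℝ → ℝ, Measurable g →
      StronglyMeasurable (uncurry fun u ω => X (t - g u) ω) := fun g hg =>
    (hXm.comp ((measurable_const.sub (hg.comp measurable_fst)).prodMk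
      measurable_snd)).stronglyMeasurable
  have hincrement : ∀ᵐ u ∂μ.restrict (Icc 0 δ),
      ∫⁻ ω, ‖X (t - u) ω - X (t - delayGrid n δ u) ω‖ₑ ^ p ∂P
        ≤ ENNReal.ofReal (K₁ * (n : ℝ) ^ (-p) + K₂ * ε ^ p * (n : ℝ) ^ (-(p / 2))) := by
    filter_upwards [ae_restrict_mem measurableSet_Icc] with u hu
    have hlag := sub_delayGrid_mem_Icc hn hu
    simp_rw [enorm_sub_rev (X (t - u) _)]
    refine (hinc _ _).trans (ENNReal.ofReal_le_ofReal ?_)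
    rw [sub_sub_sub_cancel_left, abs_of_nonneg hlag.1]
    exact increment_bound_le_of_mem_Icc hK₁ (by positivity) (by linarith) hlag
  have hbound := lintegral_enorm_integral_sub_rpow_le (μ.restrict (Icc 0 δ)) P hp
    (hXshift id measurable_id) (hXshift _ (measurable_delayGrid n δ)) hincrement
  rw [Measure.restrict_apply_univ] at hbound
  refine hbound.trans_eq ?_
  rw [ENNReal.ofReal_mul (by positivity),
    ← ENNReal.ofReal_rpow_of_nonneg ENNReal.toReal_nonneg (by linarith),
    ENNReal.ofReal_toReal (measure_ne_top μ _)]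

/-- Discretization error of the delay functional (the paper's Lemma 4 with explicit
constants): under the moment-increment assumption (A2),
`E[‖H(X_{t-·}) - H_n(X_{t-·})‖^p] ≤ μ([0,δ])^p (K₁ n^{-p} + K₂ ε^p n^{-p/2})`,
where `H_n` samples the path at the grid `g_n(u) = min(⌊nu⌋/n, ⌊nδ⌋/n)`. -/
theorem delay_discretization_error
    (Ω : Type*) [MeasurableSpace Ω] (P : Measure Ω) [IsProbabilityMeasure P]
    (d : ℕ) (hd : 1 ≤ d) (δ : ℝ) (hδ : 0 < δ)
    (μ : Measure ℝ) [IsFiniteMeasure μ]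
    (p : ℝ) (hp : 1 ≤ p)
    (K₁ K₂ : ℝ) (hK₁ : 0 ≤ K₁) (hK₂ : 0 ≤ K₂)
    (ε : ℝ) (hε : 0 < ε) (hε1 : ε ≤ 1)
    (X : ℝ → Ω → EuclideanSpace ℝ (Fin d))
    (hXm : Measurable (fun q : ℝ × Ω => X q.1 q.2))
    (hmom : ∀ t : ℝ, (∫⁻ ω, (‖X t ω‖₊ : ℝ≥0∞) ^ p ∂P) < ⊤)
    (hinc : ∀ s t : ℝ, (∫⁻ ω, (‖X t ω - X s ω‖₊ : ℝ≥0∞) ^ p ∂P)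
        ≤ ENNReal.ofReal (K₁ * |t - s| ^ p + K₂ * ε ^ p * |t - s| ^ (p / 2)))
    (t : ℝ) (n : ℕ) (hn : 1 ≤ n) :
    (∫⁻ ω, (‖(∫ u in Icc (0:ℝ) δ, X (t - u) ω ∂μ)
          - ∫ u in Icc (0:ℝ) δ,
              X (t - min ((⌊(n:ℝ) * u⌋₊ : ℝ) / n) ((⌊(n:ℝ) * δ⌋₊ : ℝ) / n)) ω ∂μ‖₊
          : ℝ≥0∞) ^ p ∂P)
      ≤ ENNReal.ofReal ((μ (Icc (0:ℝ) δ)).toReal ^ p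
          * (K₁ * (n:ℝ) ^ (-p) + K₂ * ε ^ p * (n:ℝ) ^ (-(p / 2)))) :=
  delay_discretization_error_general Ω P d δ μ p hp K₁ K₂ hK₁ hK₂ ε hε X hXm hinc t n hn
end

section
/- Let d ≥ 1, δ > 0, let μ be a finite nonnegative Borel measure on [0,δ], let x⁰ : [−δ,1] → ℝ^d be continuous with modulus of continuity ω(h) = sup{‖x⁰(a) − x⁰(b)‖ : a, b ∈ [−δ,1], |a−b| ≤ h}, and let Z : [−δ,1] → ℝ^d be continuous with sup_{s∈[−δ,1]} ‖Z(s) − x⁰(s)‖ ≤ D. Then for every integer n ≥ 1, sup_{t∈[0,1]} ‖∫₀^δ Z(⌊nt⌋/n − g_n(u)) μ(du) − ∫₀^δ x⁰(t−u) μ(du)‖ ≤ μ([0,δ]) · (D + ω(2/n)). -/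
/-!
For `u ∈ [0,δ]` and `t ∈ [0,1]` the points `a = ⌊nt⌋/n - g_n(u)` and `b = t - u` lie in
`[-δ,1]` and `|a - b| ≤ 2/n`, because `⌊nt⌋/n` and `g_n(u)` are each within `1/n` of `t` and `u`.
Going through `x⁰(a)`, the integrands therefore differ pointwise by at most `D + ω(2/n)`;
integrating over `[0,δ]` gives the bound. Both integrands are integrable because `Z` and `x⁰` are
continuous on the compact interval `[-δ,1]`.
-/

open MeasureTheory Set

/-- The modulus of continuity of `x` on `[-δ,1]` at scale `h`:
`ω(h) = sup {‖x(a) - x(b)‖ : a, b ∈ [-δ,1], |a-b| ≤ h}`. -/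
noncomputable def modulusOfContinuity {d : ℕ} (x : ℝ → EuclideanSpace ℝ (Fin d))
    (δ h : ℝ) : ℝ :=
  sSup {r : ℝ | ∃ a ∈ Icc (-δ) (1:ℝ), ∃ b ∈ Icc (-δ) (1:ℝ), |a - b| ≤ h ∧ r = ‖x a - x b‖}

theorem ContinuousOn.integrable_comp_of_ae_mem {α X E : Type*} [MeasurableSpace α]
    [TopologicalSpace X] [T2Space X] [MeasurableSpace X] [OpensMeasurableSpace X]
    [NormedAddCommGroup E] {μ : Measure α} [IsFiniteMeasure μ] {f : X → E} {K : Set X}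
    {φ : α → X} (hK : IsCompact K) (hf : ContinuousOn f K) (hφ : Measurable φ)
    (hφK : ∀ᵐ a ∂μ, φ a ∈ K) : Integrable (f ∘ φ) μ := by
  have hK_full : (μ.map φ).restrict K = μ.map φ :=
    Measure.restrict_eq_self_of_ae_mem
      ((ae_map_iff hφ.aemeasurable hK.isClosed.measurableSet).2 hφK)
  have hf_int : Integrable f (μ.map φ) := hK_full ▸ hf.integrableOn_compact hK
  exact hf_int.comp_measurable hφ

theorem norm_setIntegral_sub_setIntegral_le {α E : Type*} [MeasurableSpace α]
    [NormedAddCommGroup E] [NormedSpace ℝ E] {μ : Measure α} {s : Set α} {f g : α → E} {C : ℝ}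
    (hs : μ s < ⊤) (hf : IntegrableOn f s μ) (hg : IntegrableOn g s μ)
    (hfg : ∀ x ∈ s, ‖f x - g x‖ ≤ C) :
    ‖(∫ x in s, f x ∂μ) - ∫ x in s, g x ∂μ‖ ≤ μ.real s * C := by
  rw [← integral_sub hf hg, mul_comm]
  exact norm_setIntegral_le_of_norm_le_const hs hfg

theorem modulusOfContinuity_bddAbove {d : ℕ} {x : ℝ → EuclideanSpace ℝ (Fin d)} {δ : ℝ}
    (hx : ContinuousOn x (Icc (-δ) 1)) (h : ℝ) :
    BddAbove
      {r : ℝ | ∃ a ∈ Icc (-δ) (1:ℝ), ∃ b ∈ Icc (-δ) (1:ℝ), |a - b| ≤ h ∧ r = ‖x a - x b‖} := by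
  obtain ⟨M, hM⟩ := isCompact_Icc.exists_bound_of_continuousOn hx
  refine ⟨M + M, ?_⟩
  rintro r ⟨a, ha, b, hb, -, rfl⟩
  exact (norm_sub_le _ _).trans (add_le_add (hM a ha) (hM b hb))

theorem norm_sub_le_modulusOfContinuity {d : ℕ} {x : ℝ → EuclideanSpace ℝ (Fin d)}
    {δ h a b : ℝ} (hx : ContinuousOn x (Icc (-δ) 1)) (ha : a ∈ Icc (-δ) (1:ℝ))
    (hb : b ∈ Icc (-δ) (1:ℝ)) (hab : |a - b| ≤ h) : ‖x a - x b‖ ≤ modulusOfContinuity x δ h :=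
  le_csSup (modulusOfContinuity_bddAbove hx h) ⟨a, ha, b, hb, hab, rfl⟩

noncomputable def gridFloor (n : ℕ) (s : ℝ) : ℝ := (⌊(n:ℝ) * s⌋₊ : ℝ) / n

namespace gridFloor

variable {n : ℕ} {s : ℝ}

theorem nonneg : 0 ≤ gridFloor n s := by unfold gridFloor; positivity

theorem le_self (hs : 0 ≤ s) : gridFloor n s ≤ s := by
  unfold gridFloor
  rcases n.eq_zero_or_pos with rfl | hn
  · simpa using hs
  rw [div_le_iff₀ (by exact_mod_cast hn), mul_comm]
  exact Nat.floor_le (by positivity)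

theorem sub_inv_lt (hn : n ≠ 0) : s - 1 / n < gridFloor n s := by
  have hn : (0:ℝ) < n := by positivity
  unfold gridFloor
  rw [lt_div_iff₀ hn, sub_mul, one_div_mul_cancel hn.ne', mul_comm]
  linarith [Nat.lt_floor_add_one ((n:ℝ) * s)]

theorem measurable (n : ℕ) : Measurable (gridFloor n) :=
  (measurable_from_top.comp
    (Nat.measurable_floor.comp (measurable_const.mul measurable_id))).div_const _

end gridFloor

noncomputable def gridMap (n : ℕ) (δ u : ℝ) : ℝ := min (gridFloor n u) (gridFloor n δ)

namespace gridMap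

variable {n : ℕ} {δ u : ℝ}

theorem nonneg : 0 ≤ gridMap n δ u := le_min gridFloor.nonneg gridFloor.nonneg

theorem le_self (hu : 0 ≤ u) : gridMap n δ u ≤ u :=
  (min_le_left _ _).trans (gridFloor.le_self hu)

theorem sub_inv_lt (hn : n ≠ 0) (huδ : u ≤ δ) : u - 1 / n < gridMap n δ u :=
  lt_min (gridFloor.sub_inv_lt hn) ((sub_le_sub_right huδ _).trans_lt (gridFloor.sub_inv_lt hn))

theorem measurable (n : ℕ) (δ : ℝ) : Measurable (gridMap n δ) :=
  (gridFloor.measurable n).min measurable_const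

end gridMap

theorem gridFloor_sub_gridMap_mem_Icc {n : ℕ} {δ t u : ℝ} (ht : t ∈ Icc (0:ℝ) 1)
    (hu : u ∈ Icc 0 δ) : gridFloor n t - gridMap n δ u ∈ Icc (-δ) 1 := by
  have := gridFloor.le_self (n := n) ht.1
  have := gridMap.le_self (n := n) (δ := δ) hu.1
  have := gridFloor.nonneg (n := n) (s := t)
  have := gridMap.nonneg (n := n) (δ := δ) (u := u)
  constructor <;> linarith [ht.2, hu.2]

theorem abs_gridFloor_sub_gridMap_sub_le {n : ℕ} {δ t u : ℝ} (hn : n ≠ 0) (ht : 0 ≤ t)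
    (hu : u ∈ Icc 0 δ) : |gridFloor n t - gridMap n δ u - (t - u)| ≤ 2 / n := by
  have := gridFloor.le_self (n := n) ht
  have := gridFloor.sub_inv_lt (s := t) hn
  have := gridMap.le_self (n := n) (δ := δ) hu.1
  have := gridMap.sub_inv_lt (δ := δ) hn hu.2
  rw [abs_le]
  constructor <;> linarith [show (2:ℝ) / n = 1 / n + 1 / n by ring]

theorem delay_functional_pathwise_estimate_discretized_general
    (d : ℕ) (δ : ℝ)
    (μ : Measure ℝ) [IsFiniteMeasure μ]
    (x0 : ℝ → EuclideanSpace ℝ (Fin d)) (hx0 : ContinuousOn x0 (Icc (-δ) 1))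
    (Z : ℝ → EuclideanSpace ℝ (Fin d)) (hZ : ContinuousOn Z (Icc (-δ) 1))
    (D : ℝ) (hD : ∀ s ∈ Icc (-δ) (1:ℝ), ‖Z s - x0 s‖ ≤ D)
    (n : ℕ) (hn : 1 ≤ n) :
    ∀ t ∈ Icc (0:ℝ) 1,
      ‖(∫ u in Icc (0:ℝ) δ,
            Z ((⌊(n:ℝ) * t⌋₊ : ℝ) / n
              - min ((⌊(n:ℝ) * u⌋₊ : ℝ) / n) ((⌊(n:ℝ) * δ⌋₊ : ℝ) / n)) ∂μ)
          - ∫ u in Icc (0:ℝ) δ, x0 (t - u) ∂μ‖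
        ≤ (μ (Icc (0:ℝ) δ)).toReal * (D + modulusOfContinuity x0 δ (2 / n)) := by
  intro t ht
  have hgrid : ∀ u ∈ Icc 0 δ, gridFloor n t - gridMap n δ u ∈ Icc (-δ) 1 :=
    fun u hu => gridFloor_sub_gridMap_mem_Icc ht hu
  have hshift : ∀ u ∈ Icc 0 δ, t - u ∈ Icc (-δ) 1 :=
    fun u hu => ⟨by linarith [ht.1, hu.2], by linarith [ht.2, hu.1]⟩
  have hZ_int : IntegrableOn (fun u => Z (gridFloor n t - gridMap n δ u)) (Icc 0 δ) μ :=
    hZ.integrable_comp_of_ae_mem isCompact_Icc (measurable_const.sub (gridMap.measurable n δ))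
      ((ae_restrict_iff' measurableSet_Icc).2 (.of_forall hgrid))
  have hx0_int : IntegrableOn (fun u => x0 (t - u)) (Icc 0 δ) μ :=
    hx0.integrable_comp_of_ae_mem isCompact_Icc (measurable_const.sub measurable_id)
      ((ae_restrict_iff' measurableSet_Icc).2 (.of_forall hshift))
  refine norm_setIntegral_sub_setIntegral_le (measure_lt_top _ _) hZ_int hx0_int fun u hu => ?_
  set a := gridFloor n t - gridMap n δ u
  calc ‖Z a - x0 (t - u)‖ ≤ ‖Z a - x0 a‖ + ‖x0 a - x0 (t - u)‖ :=
        norm_sub_le_norm_sub_add_norm_sub _ _ _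
    _ ≤ D + modulusOfContinuity x0 δ (2 / n) :=
      add_le_add (hD a (hgrid u hu)) (norm_sub_le_modulusOfContinuity hx0 (hgrid u hu)
        (hshift u hu) (abs_gridFloor_sub_gridMap_sub_le (by omega) ht.1 hu))

/-- Pathwise estimate (core of the paper's Lemma 3(ii)): if `Z` is uniformly within `D`
of `x⁰` on `[-δ,1]`, then uniformly in `t ∈ [0,1]`, with the grid map
`g_n(u) = min(⌊nu⌋/n, ⌊nδ⌋/n)`,
`‖H_n(Z(⌊nt⌋/n - ·)) - H(x⁰(t - ·))‖ ≤ μ([0,δ]) (D + ω(2/n))`. -/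
theorem delay_functional_pathwise_estimate_discretized
    (d : ℕ) (hd : 1 ≤ d) (δ : ℝ) (hδ : 0 < δ)
    (μ : Measure ℝ) [IsFiniteMeasure μ]
    (x0 : ℝ → EuclideanSpace ℝ (Fin d)) (hx0 : ContinuousOn x0 (Icc (-δ) 1))
    (Z : ℝ → EuclideanSpace ℝ (Fin d)) (hZ : ContinuousOn Z (Icc (-δ) 1))
    (D : ℝ) (hD : ∀ s ∈ Icc (-δ) (1:ℝ), ‖Z s - x0 s‖ ≤ D)
    (n : ℕ) (hn : 1 ≤ n) :
    ∀ t ∈ Icc (0:ℝ) 1,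
      ‖(∫ u in Icc (0:ℝ) δ,
            Z ((⌊(n:ℝ) * t⌋₊ : ℝ) / n
              - min ((⌊(n:ℝ) * u⌋₊ : ℝ) / n) ((⌊(n:ℝ) * δ⌋₊ : ℝ) / n)) ∂μ)
          - ∫ u in Icc (0:ℝ) δ, x0 (t - u) ∂μ‖
        ≤ (μ (Icc (0:ℝ) δ)).toReal * (D + modulusOfContinuity x0 δ (2 / n)) :=
  delay_functional_pathwise_estimate_discretized_general d δ μ x0 hx0 Z hZ D hD n hn
end

section
/- Let d ≥ 1, δ > 0, let μ be a finite nonnegative Borel measure on [0,δ], let z : [−δ,1] → ℝ^d be continuous, let Θ be a compact metric space and let f : ℝ^d × ℝ^d × Θ → ℝ be continuous. For n ≥ 1 set δ_n = ⌊nδ⌋/n and g_n(u) = min(⌊nu⌋/n, δ_n). Then sup_{θ∈Θ} | (1/n) Σ_{k=1}^{n} f( z((k−1)/n), ∫₀^δ z((k−1)/n − g_n(u)) μ(du), θ ) − ∫₀^1 f( z(s), ∫₀^δ z(s−u) μ(du), θ ) ds | → 0 as n → ∞. -/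
open MeasureTheory Set Filter

set_option maxHeartbeats 1000000

open MeasureTheory Set Filter

lemma riemann_aux {F : ℝ → ℝ} (hF : ContinuousOn F (Icc 0 1)) {n : ℕ} (hn : 1 ≤ n) {ε : ℝ}
    (hmod : ∀ s ∈ Icc (0:ℝ) 1, ∀ t ∈ Icc (0:ℝ) 1, |s - t| ≤ 1 / n → |F s - F t| ≤ ε) :
    |(1 / (n:ℝ)) * ∑ k ∈ Finset.Icc 1 n, F (((k:ℝ) - 1) / n) - ∫ s in (0:ℝ)..1, F s| ≤ ε := by
  have hn0 : (0:ℝ) < n := by exact_mod_cast hn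
  set a : ℕ → ℝ := fun j => j / n with ha
  have hmem : ∀ j ≤ n, a j ∈ Icc (0:ℝ) 1 := by
    intro j hj
    constructor
    · positivity
    · rw [ha]; rw [div_le_one hn0]; exact_mod_cast hj
  have hsub : ∀ j, j < n → Icc (a j) (a (j+1)) ⊆ Icc (0:ℝ) 1 := fun j hj =>
    Icc_subset_Icc (hmem j hj.le).1 (hmem (j+1) hj).2
  have hle : ∀ j : ℕ, a j ≤ a (j+1) := by
    intro j
    apply div_le_div_of_nonneg_right ?_ hn0.le
    exact_mod_cast Nat.le_succ j
  have hint : ∀ j, j < n → IntervalIntegrable F MeasureTheory.volume (a j) (a (j+1)) := by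
    intro j hj
    apply ContinuousOn.intervalIntegrable
    rw [uIcc_of_le (hle j)]
    exact hF.mono (hsub j hj)
  have hsplit : ∫ s in (0:ℝ)..1, F s = ∑ j ∈ Finset.range n, ∫ s in a j..a (j+1), F s := by
    rw [intervalIntegral.sum_integral_adjacent_intervals hint]
    norm_num [ha]
    rw [div_self (ne_of_gt hn0)]
  have hsum : (1 / (n:ℝ)) * ∑ k ∈ Finset.Icc 1 n, F (((k:ℝ) - 1) / n)
      = ∑ j ∈ Finset.range n, (1 / (n:ℝ)) * F (a j) := by
    rw [Finset.mul_sum, ← Finset.Ico_add_one_right_eq_Icc, Finset.sum_Ico_eq_sum_range]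
    refine Finset.sum_congr rfl fun j _ => ?_
    congr 1
    push_cast [ha]
    ring_nf
  have hterm : ∀ j, j < n →
      |(1 / (n:ℝ)) * F (a j) - ∫ s in a j..a (j+1), F s| ≤ ε * (1/n) := by
    intro j hj
    have hconst : (1 / (n:ℝ)) * F (a j) = ∫ _ in a j..a (j+1), F (a j) := by
      rw [intervalIntegral.integral_const, smul_eq_mul]
      congr 1
      rw [ha]
      push_cast
      ring
    rw [hconst, ← intervalIntegral.integral_sub (intervalIntegrable_const) (hint j hj)]
    have := intervalIntegral.norm_integral_le_of_norm_le_const (C := ε)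
      (f := fun s => F (a j) - F s) (a := a j) (b := a (j+1)) ?_
    · calc |∫ s in a j..a (j+1), (F (a j) - F s)| ≤ ε * |a (j+1) - a j| := this
        _ = ε * (1/n) := by
          congr 1
          rw [abs_of_nonneg (by linarith [hle j])]
          rw [ha]; push_cast; ring
    · intro x hx
      rw [uIoc_of_le (hle j)] at hx
      have hx1 : x ∈ Icc (0:ℝ) 1 := hsub j hj ⟨hx.1.le, hx.2⟩
      have haj : a j ∈ Icc (0:ℝ) 1 := hmem j hj.le
      have hd : |a j - x| ≤ 1 / n := by
        have h1 : a j ≤ x := hx.1.le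
        have h2 : x ≤ a (j+1) := hx.2
        have h3 : a (j+1) - a j = 1/n := by rw [ha]; push_cast; ring
        rw [abs_sub_comm, abs_of_nonneg (by linarith)]
        linarith
      exact hmod _ haj _ hx1 hd
  calc |(1 / (n:ℝ)) * ∑ k ∈ Finset.Icc 1 n, F (((k:ℝ) - 1) / n) - ∫ s in (0:ℝ)..1, F s|
      = |∑ j ∈ Finset.range n, ((1 / (n:ℝ)) * F (a j) - ∫ s in a j..a (j+1), F s)| := by
        rw [hsum, hsplit, Finset.sum_sub_distrib]
    _ ≤ ∑ j ∈ Finset.range n, |(1 / (n:ℝ)) * F (a j) - ∫ s in a j..a (j+1), F s| :=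
        Finset.abs_sum_le_sum_abs _ _
    _ ≤ ∑ _j ∈ Finset.range n, ε * (1/n) :=
        Finset.sum_le_sum fun j hj => hterm j (Finset.mem_range.mp hj)
    _ = ε := by
        rw [Finset.sum_const, Finset.card_range, nsmul_eq_mul]
        field_simp

/-- Uniform-in-θ Riemann-sum convergence (deterministic skeleton of the paper's
Lemma 6(i)): for a continuous path `z` on `[-δ,1]`, a compact metric parameter space `Θ`
and continuous `f`,
`sup_θ |(1/n) Σ_{k=1}^n f(z((k-1)/n), H_n(z((k-1)/n - ·)), θ) - ∫₀¹ f(z(s), H(z(s-·)), θ) ds| → 0`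
as `n → ∞`, where `H_n` uses the grid map `g_n(u) = min(⌊nu⌋/n, ⌊nδ⌋/n)`. -/
theorem riemann_sum_uniform_convergence
    (d : ℕ) (hd : 1 ≤ d) (δ : ℝ) (hδ : 0 < δ)
    (μ : Measure ℝ) [IsFiniteMeasure μ]
    (z : ℝ → EuclideanSpace ℝ (Fin d)) (hz : ContinuousOn z (Icc (-δ) 1))
    (Θ : Type*) [MetricSpace Θ] [CompactSpace Θ]
    (f : EuclideanSpace ℝ (Fin d) → EuclideanSpace ℝ (Fin d) → Θ → ℝ)
    (hf : Continuous fun q : EuclideanSpace ℝ (Fin d) × EuclideanSpace ℝ (Fin d) × Θ =>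
      f q.1 q.2.1 q.2.2) :
    Tendsto (fun n : ℕ => ⨆ θ : Θ,
        |(1 / (n:ℝ)) * ∑ k ∈ Finset.Icc 1 n,
            f (z (((k:ℝ) - 1) / n))
              (∫ u in Icc (0:ℝ) δ,
                z (((k:ℝ) - 1) / n
                  - min ((⌊(n:ℝ) * u⌋₊ : ℝ) / n) ((⌊(n:ℝ) * δ⌋₊ : ℝ) / n)) ∂μ) θ
          - ∫ s in (0:ℝ)..1, f (z s) (∫ u in Icc (0:ℝ) δ, z (s - u) ∂μ) θ|)
      atTop (nhds 0) := by
  classical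
  obtain hΘ | hΘ := isEmpty_or_nonempty Θ
  · have : ∀ g : Θ → ℝ, (⨆ θ : Θ, g θ) = 0 := fun g => by
      rw [iSup, range_eq_empty, Real.sSup_empty]
    simpa [this] using
      (tendsto_const_nhds : Tendsto (fun _ : ℕ => (0:ℝ)) atTop (nhds 0))
  have hsub01 : Icc (0:ℝ) 1 ⊆ Icc (-δ) 1 := Icc_subset_Icc (by linarith) le_rfl
  -- clamp map and extension of z
  set c : ℝ → ℝ := fun x => max (-δ) (min 1 x) with hcdef
  have hc_cont : Continuous c := continuous_const.max (continuous_const.min continuous_id)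
  have hc_mem : ∀ x, c x ∈ Icc (-δ) 1 :=
    fun x => ⟨le_max_left _ _, max_le (by linarith) (min_le_left _ _)⟩
  have hc_eq : ∀ x ∈ Icc (-δ) 1, c x = x := fun x hx => by
    simp only [hcdef]
    rw [min_eq_right hx.2, max_eq_right hx.1]
  set w : ℝ → EuclideanSpace ℝ (Fin d) := fun x => z (c x) with hwdef
  have hw_cont : Continuous w := hz.comp_continuous hc_cont hc_mem
  have hw_eq : ∀ x ∈ Icc (-δ) 1, w x = z x := fun x hx => by
    simp only [hwdef, hc_eq x hx]
  -- global bound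
  obtain ⟨C, hC⟩ := isCompact_Icc.exists_bound_of_continuousOn hz
  have hwC : ∀ x, ‖w x‖ ≤ C := fun x => hC _ (hc_mem x)
  have hC0 : 0 ≤ C := le_trans (norm_nonneg _) (hwC 0)
  -- restricted measure
  set ν : Measure ℝ := μ.restrict (Icc 0 δ) with hνdef
  have hνfin : IsFiniteMeasure ν := by rw [hνdef]; infer_instance
  set M : ℝ := (ν univ).toReal with hMdef
  have hM0 : 0 ≤ M := ENNReal.toReal_nonneg
  -- integrability helper
  have hInt : ∀ g : ℝ → ℝ, Measurable g → Integrable (fun u => w (g u)) ν := fun g hg =>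
    (integrable_const C).mono' ((hw_cont.measurable.comp hg).aestronglyMeasurable)
      (Eventually.of_forall fun u => hwC _)
  -- difference of integrals helper
  have hdiff : ∀ (g h : ℝ → ℝ), Measurable g → Measurable h → ∀ ε : ℝ,
      (∀ u ∈ Icc (0:ℝ) δ, ‖w (g u) - w (h u)‖ ≤ ε) →
      ‖(∫ u in Icc (0:ℝ) δ, w (g u) ∂μ) - ∫ u in Icc (0:ℝ) δ, w (h u) ∂μ‖ ≤ ε * M := by
    intro g h hg hh ε hε
    rw [← integral_sub (hInt g hg) (hInt h hh)]
    refine norm_integral_le_of_norm_le_const ?_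
    filter_upwards [ae_restrict_mem measurableSet_Icc] with u hu
    exact hε u hu
  -- norm bound for integrals
  have hball : ∀ g : ℝ → ℝ, Measurable g →
      (∫ u in Icc (0:ℝ) δ, w (g u) ∂μ) ∈
        Metric.closedBall (0 : EuclideanSpace ℝ (Fin d)) (C * M) := by
    intro g hg
    rw [mem_closedBall_zero_iff]
    exact norm_integral_le_of_norm_le_const (Eventually.of_forall fun u => hwC _)
  -- uniform continuity of w on the compact interval
  have hucw : ∀ ε : ℝ, 0 < ε → ∃ r, 0 < r ∧ ∀ x ∈ Icc (-δ) 1, ∀ y ∈ Icc (-δ) 1,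
      |x - y| < r → ‖w x - w y‖ < ε := by
    intro ε hε
    have huc := (isCompact_Icc.uniformContinuousOn_of_continuous
      (hw_cont.continuousOn : ContinuousOn w (Icc (-δ) 1)))
    rw [Metric.uniformContinuousOn_iff] at huc
    obtain ⟨r, hr, h⟩ := huc ε hε
    refine ⟨r, hr, fun x hx y hy hxy => ?_⟩
    have := h x hx y hy (by rwa [Real.dist_eq])
    rwa [dist_eq_norm] at this
  -- the limit inner integral
  set φ : ℝ → EuclideanSpace ℝ (Fin d) := fun s => ∫ u in Icc (0:ℝ) δ, w (s - u) ∂μ with hφdef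
  have hφcont : ContinuousOn φ (Icc 0 1) := by
    rw [Metric.continuousOn_iff]
    intro s hs ε hε
    obtain ⟨r, hr, h⟩ := hucw (ε / (2 * (M + 1))) (by positivity)
    refine ⟨r, hr, fun t ht hts => ?_⟩
    rw [dist_eq_norm]
    have key : ‖φ t - φ s‖ ≤ (ε / (2 * (M + 1))) * M := by
      refine hdiff (fun u => t - u) (fun u => s - u)
        (measurable_const.sub measurable_id) (measurable_const.sub measurable_id) _ ?_
      intro u hu
      have h1 : t - u ∈ Icc (-δ) 1 := ⟨by linarith [ht.1, hu.2], by linarith [ht.2, hu.1]⟩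
      have h2 : s - u ∈ Icc (-δ) 1 := ⟨by linarith [hs.1, hu.2], by linarith [hs.2, hu.1]⟩
      have heq : t - u - (s - u) = t - s := by ring
      refine (h _ h1 _ h2 ?_).le
      rw [heq]
      rwa [Real.dist_eq] at hts
    have hlt : (ε / (2 * (M + 1))) * M < ε := by
      rw [div_mul_eq_mul_div, div_lt_iff₀ (by positivity)]
      nlinarith
    linarith
  -- Ψ and its uniform continuity
  set Ψ : ℝ × Θ → ℝ := fun p => f (w p.1) (φ p.1) p.2 with hΨdef
  have hΨcont : ContinuousOn Ψ (Icc (0:ℝ) 1 ×ˢ (univ : Set Θ)) := by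
    have hmap : ContinuousOn (fun p : ℝ × Θ => (w p.1, φ p.1, p.2))
        (Icc (0:ℝ) 1 ×ˢ (univ : Set Θ)) := by
      apply ContinuousOn.prodMk
      · exact (hw_cont.comp continuous_fst).continuousOn
      apply ContinuousOn.prodMk
      · exact hφcont.comp continuous_fst.continuousOn (fun p hp => hp.1)
      · exact continuous_snd.continuousOn
    exact hf.comp_continuousOn hmap
  have hucΨ : ∀ ε : ℝ, 0 < ε → ∃ r, 0 < r ∧ ∀ s ∈ Icc (0:ℝ) 1, ∀ t ∈ Icc (0:ℝ) 1, ∀ θ : Θ,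
      |s - t| < r → |Ψ (s, θ) - Ψ (t, θ)| < ε := by
    intro ε hε
    have huc := ((isCompact_Icc.prod isCompact_univ).uniformContinuousOn_of_continuous hΨcont)
    rw [Metric.uniformContinuousOn_iff] at huc
    obtain ⟨r, hr, h⟩ := huc ε hε
    refine ⟨r, hr, fun s hs t ht θ hst => ?_⟩
    have hd : dist ((s, θ) : ℝ × Θ) (t, θ) = |s - t| := by
      rw [Prod.dist_eq, dist_self, Real.dist_eq]
      exact max_eq_left (abs_nonneg _)
    have := h (s, θ) ⟨hs, mem_univ _⟩ (t, θ) ⟨ht, mem_univ _⟩ (by rw [hd]; exact hst)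
    rwa [Real.dist_eq] at this
  -- uniform continuity of f on a compact product
  have hucf : ∀ ε : ℝ, 0 < ε → ∃ η, 0 < η ∧
      ∀ (x y y' : EuclideanSpace ℝ (Fin d)) (θ : Θ), x ∈ z '' Icc (-δ) 1 →
      y ∈ Metric.closedBall (0 : EuclideanSpace ℝ (Fin d)) (C * M) →
      y' ∈ Metric.closedBall (0 : EuclideanSpace ℝ (Fin d)) (C * M) →
      ‖y - y'‖ < η → |f x y θ - f x y' θ| < ε := by
    intro ε hε
    have hTcomp : IsCompact ((z '' Icc (-δ) 1) ×ˢ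
        ((Metric.closedBall (0 : EuclideanSpace ℝ (Fin d)) (C * M)) ×ˢ (univ : Set Θ))) :=
      (isCompact_Icc.image_of_continuousOn hz).prod
        ((isCompact_closedBall _ _).prod isCompact_univ)
    have huc := hTcomp.uniformContinuousOn_of_continuous hf.continuousOn
    rw [Metric.uniformContinuousOn_iff] at huc
    obtain ⟨η, hη, h⟩ := huc ε hε
    refine ⟨η, hη, fun x y y' θ hx hy hy' hyy => ?_⟩
    have hd : dist ((x, y, θ) : EuclideanSpace ℝ (Fin d) × EuclideanSpace ℝ (Fin d) × Θ)
        (x, y', θ) = ‖y - y'‖ := by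
      rw [Prod.dist_eq, Prod.dist_eq, dist_self, dist_self, dist_eq_norm]
      rw [max_eq_left (norm_nonneg _), max_eq_right (norm_nonneg _)]
    have := h (x, y, θ) ⟨hx, hy, mem_univ _⟩ (x, y', θ) ⟨hx, hy', mem_univ _⟩
      (by rw [hd]; exact hyy)
    rwa [Real.dist_eq] at this
  have hwmem : ∀ x, w x ∈ z '' Icc (-δ) 1 := fun x => ⟨c x, hc_mem x, rfl⟩
  -- grid facts
  have hgrid : ∀ n : ℕ, 1 ≤ n → ∀ u ∈ Icc (0:ℝ) δ,
      (min ((⌊(n:ℝ) * u⌋₊ : ℝ) / n) ((⌊(n:ℝ) * δ⌋₊ : ℝ) / n) ∈ Icc (0:ℝ) δ) ∧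
      |min ((⌊(n:ℝ) * u⌋₊ : ℝ) / n) ((⌊(n:ℝ) * δ⌋₊ : ℝ) / n) - u| ≤ 1 / n := by
    intro n hn u hu
    have hn0 : (0:ℝ) < n := by exact_mod_cast hn
    have h1 : (⌊(n:ℝ) * u⌋₊ : ℝ) / n ≤ u := by
      rw [div_le_iff₀ hn0]
      have := Nat.floor_le (mul_nonneg hn0.le hu.1)
      linarith
    have h2 : (⌊(n:ℝ) * δ⌋₊ : ℝ) / n ≤ δ := by
      rw [div_le_iff₀ hn0]
      have := Nat.floor_le (mul_nonneg hn0.le hδ.le)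
      linarith
    have hinv : (1 / (n:ℝ)) * n = 1 := by field_simp
    have h3 : u - 1/n < (⌊(n:ℝ) * u⌋₊ : ℝ) / n := by
      rw [lt_div_iff₀ hn0]
      have := Nat.lt_floor_add_one ((n:ℝ) * u)
      nlinarith [hinv]
    have h4 : δ - 1/n < (⌊(n:ℝ) * δ⌋₊ : ℝ) / n := by
      rw [lt_div_iff₀ hn0]
      have := Nat.lt_floor_add_one ((n:ℝ) * δ)
      nlinarith [hinv]
    have hmin_le : min ((⌊(n:ℝ) * u⌋₊ : ℝ) / n) ((⌊(n:ℝ) * δ⌋₊ : ℝ) / n) ≤ u :=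
      min_le_of_left_le h1
    have hmin_ge : u - 1/n ≤ min ((⌊(n:ℝ) * u⌋₊ : ℝ) / n) ((⌊(n:ℝ) * δ⌋₊ : ℝ) / n) :=
      le_min h3.le (by linarith [hu.2])
    refine ⟨⟨le_min (by positivity) (by positivity), min_le_of_right_le h2⟩, ?_⟩
    rw [abs_le]
    constructor <;> [linarith; linarith [one_div_pos.mpr hn0]]
  -- rewriting the sum in terms of w
  have hrewriteS : ∀ n : ℕ, ∀ θ : Θ,
      (∑ k ∈ Finset.Icc 1 n,
        f (z (((k:ℝ) - 1) / n))
          (∫ u in Icc (0:ℝ) δ,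
            z (((k:ℝ) - 1) / n
              - min ((⌊(n:ℝ) * u⌋₊ : ℝ) / n) ((⌊(n:ℝ) * δ⌋₊ : ℝ) / n)) ∂μ) θ)
      = ∑ k ∈ Finset.Icc 1 n,
        f (w (((k:ℝ) - 1) / n))
          (∫ u in Icc (0:ℝ) δ,
            w (((k:ℝ) - 1) / n
              - min ((⌊(n:ℝ) * u⌋₊ : ℝ) / n) ((⌊(n:ℝ) * δ⌋₊ : ℝ) / n)) ∂μ) θ := by
    intro n θ
    refine Finset.sum_congr rfl fun k hk => ?_
    obtain ⟨hk1, hk2⟩ := Finset.mem_Icc.mp hk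
    have hn : 1 ≤ n := le_trans hk1 hk2
    have hn0 : (0:ℝ) < n := by exact_mod_cast hn
    have hk1' : (1:ℝ) ≤ k := by exact_mod_cast hk1
    have hk2' : (k:ℝ) ≤ n := by exact_mod_cast hk2
    have hsk : ((k:ℝ) - 1) / n ∈ Icc (0:ℝ) 1 := by
      constructor
      · apply div_nonneg (by linarith) hn0.le
      · rw [div_le_one hn0]; linarith
    have hIeq : (∫ u in Icc (0:ℝ) δ,
        z (((k:ℝ) - 1) / n
          - min ((⌊(n:ℝ) * u⌋₊ : ℝ) / n) ((⌊(n:ℝ) * δ⌋₊ : ℝ) / n)) ∂μ)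
        = ∫ u in Icc (0:ℝ) δ,
        w (((k:ℝ) - 1) / n
          - min ((⌊(n:ℝ) * u⌋₊ : ℝ) / n) ((⌊(n:ℝ) * δ⌋₊ : ℝ) / n)) ∂μ := by
      refine setIntegral_congr_fun measurableSet_Icc fun u hu => ?_
      have hg := hgrid n hn u hu
      have harg : ((k:ℝ) - 1) / n
          - min ((⌊(n:ℝ) * u⌋₊ : ℝ) / n) ((⌊(n:ℝ) * δ⌋₊ : ℝ) / n) ∈ Icc (-δ) 1 :=
      ⟨by linarith [hsk.1, hg.1.2], by linarith [hsk.2, hg.1.1]⟩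
      exact (hw_eq _ harg).symm
    rw [← hw_eq _ (hsub01 hsk), hIeq]
  -- rewriting the limit integral in terms of Ψ
  have hrewriteI : ∀ θ : Θ,
      (∫ s in (0:ℝ)..1, f (z s) (∫ u in Icc (0:ℝ) δ, z (s - u) ∂μ) θ)
      = ∫ s in (0:ℝ)..1, Ψ (s, θ) := by
    intro θ
    refine intervalIntegral.integral_congr fun s hs => ?_
    rw [uIcc_of_le zero_le_one] at hs
    have hIeq : (∫ u in Icc (0:ℝ) δ, z (s - u) ∂μ) = ∫ u in Icc (0:ℝ) δ, w (s - u) ∂μ := by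
      refine setIntegral_congr_fun measurableSet_Icc fun u hu => ?_
      have harg : s - u ∈ Icc (-δ) 1 := ⟨by linarith [hs.1, hu.2], by linarith [hs.2, hu.1]⟩
      exact (hw_eq _ harg).symm
    simp only [hΨdef, hφdef]
    rw [← hw_eq s (hsub01 hs), hIeq]
  -- main ε-argument
  rw [Metric.tendsto_atTop]
  intro ε hε
  obtain ⟨η, hη, hfkey⟩ := hucf (ε/4) (by positivity)
  obtain ⟨r₁, hr₁, hwkey⟩ := hucw (η / (2 * (M + 1))) (by positivity)
  obtain ⟨r₂, hr₂, hΨkey⟩ := hucΨ (ε/4) (by positivity)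
  obtain ⟨N, hN⟩ := exists_nat_gt (max (1 / r₁) (1 / r₂))
  refine ⟨max N 1, fun n hn => ?_⟩
  have hn1 : 1 ≤ n := le_trans (le_max_right _ _) hn
  have hn0 : (0:ℝ) < n := by exact_mod_cast hn1
  have hnN : (N:ℝ) ≤ n := by exact_mod_cast le_trans (le_max_left _ _) hn
  have hinv1 : 1 / (n:ℝ) < r₁ := by
    have h1 : 1 / r₁ < (n:ℝ) := lt_of_le_of_lt (le_max_left _ _) (lt_of_lt_of_le hN hnN)
    rw [div_lt_iff₀ hr₁] at h1
    rw [div_lt_iff₀ hn0]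
    nlinarith
  have hinv2 : 1 / (n:ℝ) < r₂ := by
    have h1 : 1 / r₂ < (n:ℝ) := lt_of_le_of_lt (le_max_right _ _) (lt_of_lt_of_le hN hnN)
    rw [div_lt_iff₀ hr₂] at h1
    rw [div_lt_iff₀ hn0]
    nlinarith
  -- per-θ bound
  have hbound : ∀ θ : Θ,
      |(1 / (n:ℝ)) * ∑ k ∈ Finset.Icc 1 n,
          f (z (((k:ℝ) - 1) / n))
            (∫ u in Icc (0:ℝ) δ,
              z (((k:ℝ) - 1) / n
                - min ((⌊(n:ℝ) * u⌋₊ : ℝ) / n) ((⌊(n:ℝ) * δ⌋₊ : ℝ) / n)) ∂μ) θ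
        - ∫ s in (0:ℝ)..1, f (z s) (∫ u in Icc (0:ℝ) δ, z (s - u) ∂μ) θ| ≤ ε/2 := by
    intro θ
    rw [hrewriteS n θ, hrewriteI θ]
    set A : ℝ := (1 / (n:ℝ)) * ∑ k ∈ Finset.Icc 1 n,
      f (w (((k:ℝ) - 1) / n))
        (∫ u in Icc (0:ℝ) δ,
          w (((k:ℝ) - 1) / n
            - min ((⌊(n:ℝ) * u⌋₊ : ℝ) / n) ((⌊(n:ℝ) * δ⌋₊ : ℝ) / n)) ∂μ) θ with hAdef
    set B : ℝ := (1 / (n:ℝ)) * ∑ k ∈ Finset.Icc 1 n, Ψ ((((k:ℝ) - 1) / n), θ) with hBdef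
    have hAB : |A - B| ≤ ε/4 := by
      rw [hAdef, hBdef, ← mul_sub, ← Finset.sum_sub_distrib, abs_mul,
        abs_of_nonneg (by positivity : (0:ℝ) ≤ 1 / (n:ℝ))]
      have hper : ∀ k ∈ Finset.Icc 1 n,
          |f (w (((k:ℝ) - 1) / n))
              (∫ u in Icc (0:ℝ) δ,
                w (((k:ℝ) - 1) / n
                  - min ((⌊(n:ℝ) * u⌋₊ : ℝ) / n) ((⌊(n:ℝ) * δ⌋₊ : ℝ) / n)) ∂μ) θ
            - Ψ ((((k:ℝ) - 1) / n), θ)| ≤ ε/4 := by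
        intro k hk
        obtain ⟨hk1, hk2⟩ := Finset.mem_Icc.mp hk
        have hk1' : (1:ℝ) ≤ k := by exact_mod_cast hk1
        have hk2' : (k:ℝ) ≤ n := by exact_mod_cast hk2
        have hsk : ((k:ℝ) - 1) / n ∈ Icc (0:ℝ) 1 := by
          constructor
          · apply div_nonneg (by linarith) hn0.le
          · rw [div_le_one hn0]; linarith
        have hgmeas : Measurable (fun u : ℝ =>
            ((k:ℝ) - 1) / n - min ((⌊(n:ℝ) * u⌋₊ : ℝ) / n) ((⌊(n:ℝ) * δ⌋₊ : ℝ) / n)) := by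
          apply measurable_const.sub
          apply Measurable.min ?_ measurable_const
          apply Measurable.div_const
          exact measurable_from_top.comp ((measurable_const.mul measurable_id).nat_floor)
        have hy := hball _ hgmeas
        have hy' := hball (fun u => ((k:ℝ) - 1) / n - u)
          (measurable_const.sub measurable_id)
        have hclose : ‖(∫ u in Icc (0:ℝ) δ,
            w (((k:ℝ) - 1) / n
              - min ((⌊(n:ℝ) * u⌋₊ : ℝ) / n) ((⌊(n:ℝ) * δ⌋₊ : ℝ) / n)) ∂μ)
            - ∫ u in Icc (0:ℝ) δ, w (((k:ℝ) - 1) / n - u) ∂μ‖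
            ≤ (η / (2 * (M + 1))) * M := by
          refine hdiff _ _ hgmeas (measurable_const.sub measurable_id) _ ?_
          intro u hu
          have hg := hgrid n hn1 u hu
          have harg1 : ((k:ℝ) - 1) / n
              - min ((⌊(n:ℝ) * u⌋₊ : ℝ) / n) ((⌊(n:ℝ) * δ⌋₊ : ℝ) / n) ∈ Icc (-δ) 1 :=
            ⟨by linarith [hsk.1, hg.1.2], by linarith [hsk.2, hg.1.1]⟩
          have harg2 : ((k:ℝ) - 1) / n - u ∈ Icc (-δ) 1 :=
            ⟨by linarith [hsk.1, hu.2], by linarith [hsk.2, hu.1]⟩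
          refine (hwkey _ harg1 _ harg2 ?_).le
          have heq : ((k:ℝ) - 1) / n
              - min ((⌊(n:ℝ) * u⌋₊ : ℝ) / n) ((⌊(n:ℝ) * δ⌋₊ : ℝ) / n)
              - (((k:ℝ) - 1) / n - u)
              = -(min ((⌊(n:ℝ) * u⌋₊ : ℝ) / n) ((⌊(n:ℝ) * δ⌋₊ : ℝ) / n) - u) := by ring
          rw [heq, abs_neg]
          exact lt_of_le_of_lt hg.2 hinv1
        have hlt : (η / (2 * (M + 1))) * M < η := by
          rw [div_mul_eq_mul_div, div_lt_iff₀ (by positivity)]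
          nlinarith
        have := hfkey (w (((k:ℝ) - 1) / n)) _ _ θ (hwmem _) hy hy' (lt_of_le_of_lt hclose hlt)
        exact this.le
      calc (1 / (n:ℝ)) * |∑ k ∈ Finset.Icc 1 n,
            (f (w (((k:ℝ) - 1) / n))
              (∫ u in Icc (0:ℝ) δ,
                w (((k:ℝ) - 1) / n
                  - min ((⌊(n:ℝ) * u⌋₊ : ℝ) / n) ((⌊(n:ℝ) * δ⌋₊ : ℝ) / n)) ∂μ) θ
              - Ψ ((((k:ℝ) - 1) / n), θ))|
          ≤ (1 / (n:ℝ)) * ∑ k ∈ Finset.Icc 1 n, (ε/4) := by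
            apply mul_le_mul_of_nonneg_left ?_ (by positivity)
            exact le_trans (Finset.abs_sum_le_sum_abs _ _) (Finset.sum_le_sum hper)
        _ = ε/4 := by
            rw [Finset.sum_const, Nat.card_Icc, nsmul_eq_mul]
            push_cast
            field_simp
    have hBI : |B - ∫ s in (0:ℝ)..1, Ψ (s, θ)| ≤ ε/4 := by
      have hFcont : ContinuousOn (fun s => Ψ (s, θ)) (Icc 0 1) := by
        refine hΨcont.comp (Continuous.continuousOn ?_) (fun s hs => ⟨hs, mem_univ _⟩)
        exact continuous_id.prodMk continuous_const
      refine riemann_aux hFcont hn1 ?_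
      intro s hs t ht hst
      exact (hΨkey s hs t ht θ (lt_of_le_of_lt hst hinv2)).le
    calc |A - ∫ s in (0:ℝ)..1, Ψ (s, θ)|
        ≤ |A - B| + |B - ∫ s in (0:ℝ)..1, Ψ (s, θ)| := abs_sub_le _ _ _
      _ ≤ ε/4 + ε/4 := add_le_add hAB hBI
      _ = ε/2 := by ring
  -- conclude
  have hbdd : BddAbove (range fun θ : Θ =>
      |(1 / (n:ℝ)) * ∑ k ∈ Finset.Icc 1 n,
          f (z (((k:ℝ) - 1) / n))
            (∫ u in Icc (0:ℝ) δ,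
              z (((k:ℝ) - 1) / n
                - min ((⌊(n:ℝ) * u⌋₊ : ℝ) / n) ((⌊(n:ℝ) * δ⌋₊ : ℝ) / n)) ∂μ) θ
        - ∫ s in (0:ℝ)..1, f (z s) (∫ u in Icc (0:ℝ) δ, z (s - u) ∂μ) θ|) := by
    refine ⟨ε/2, ?_⟩
    rintro x ⟨θ, rfl⟩
    exact hbound θ
  have h1 : (⨆ θ : Θ, _) ≤ ε/2 := ciSup_le hbound
  have h2 : (0:ℝ) ≤ ⨆ θ : Θ,
      |(1 / (n:ℝ)) * ∑ k ∈ Finset.Icc 1 n,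
          f (z (((k:ℝ) - 1) / n))
            (∫ u in Icc (0:ℝ) δ,
              z (((k:ℝ) - 1) / n
                - min ((⌊(n:ℝ) * u⌋₊ : ℝ) / n) ((⌊(n:ℝ) * δ⌋₊ : ℝ) / n)) ∂μ) θ
        - ∫ s in (0:ℝ)..1, f (z s) (∫ u in Icc (0:ℝ) δ, z (s - u) ∂μ) θ| :=
    le_ciSup_of_le hbdd hΘ.some (abs_nonneg _)
  rw [Real.dist_eq, sub_zero, abs_of_nonneg h2]
  calc (⨆ θ : Θ, _) ≤ ε/2 := h1
    _ < ε := by linarith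
end
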